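/- If M is a well-typed program of type A in λ_eff^let (i.e., ∅; none ⊢ M : A | ⟨⟩), then there exists a λ_eff^Λ term e such that the typing derivation of M elaborates to e under the identity variable mapping (∅; none ⊢ M : A | ⟨⟩ ⤳_∅ e) and e is well typed in λ_eff^Λ with the same type and empty effect: ∅; none ⊢ e : A | ⟨⟩. -/

import Mathlib

set_option autoImplicit true
set_option maxHeartbeats 1000000

namespace EffLam

/-! ## Types, effects, schemes -/

/-- Effects: finite sets of effect-operation names. -/
abbrev Eff := Finset ℕ

/-- Types of `λ_eff^Λ` / `λ_eff^let`: type variables, base types, effectful function types. -/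
inductive Ty : Type
  | tvar  : ℕ → Ty
  | base  : ℕ → Ty
  | arrow : Ty → Eff → Ty → Ty

/-- The distinguished base type ⊥. -/
def Ty.bot : Ty := .base 0

/-- Free type variables of a type. -/
def Ty.ftv : Ty → Finset ℕ
  | .tvar a => {a}
  | .base _ => ∅
  | .arrow A _ B => A.ftv ∪ B.ftv

/-- (Partial) type substitutions. -/
abbrev TySubst := ℕ → Option Ty

/-- Remove the variables `as` from the domain of a substitution (for binders). -/
def mask (s : TySubst) (as : List ℕ) : TySubst :=
  fun b => if b ∈ as then none else s b

/-- Simultaneous substitution `[As/as]`. -/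
def subList (as : List ℕ) (As : List Ty) : TySubst :=
  fun b => (as.zip As).lookup b

/-- Single substitution `[A/a]`. -/
def sub1 (a : ℕ) (A : Ty) : TySubst := fun b => if b = a then some A else none

/-- Substituting ⊥ for every variable in `bs`. -/
def botSub (bs : List ℕ) : TySubst := fun a => if a ∈ bs then some Ty.bot else none

/-- Applying a type substitution to a type. -/
def Ty.subst (s : TySubst) : Ty → Ty
  | .tvar a => (s a).getD (.tvar a)
  | .base i => .base i
  | .arrow A ε B => .arrow (A.subst s) ε (B.subst s)

/-- Type schemes `σ ::= A | ∀α.σ`. -/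
inductive Scheme : Type
  | ty  : Ty → Scheme
  | all : ℕ → Scheme → Scheme

/-- Prefix a scheme with quantifiers `∀ᾱ.σ`. -/
def Scheme.allEach (as : List ℕ) (σ : Scheme) : Scheme := as.foldr .all σ

/-- The type scheme `∀ᾱ.A`. -/
def Scheme.close (as : List ℕ) (A : Ty) : Scheme := Scheme.allEach as (.ty A)

/-- Free type variables of a scheme. -/
def Scheme.ftv : Scheme → Finset ℕ
  | .ty A => A.ftv
  | .all a σ => σ.ftv.erase a

/-- (Naive) substitution on schemes. -/
def Scheme.subst (s : TySubst) : Scheme → Scheme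
  | .ty A => .ty (A.subst s)
  | .all a σ => .all a (σ.subst (mask s [a]))

/-- First-order closed types `ι₁ →⟨⟩ ⋯ →⟨⟩ ιₙ` for constants. -/
inductive FirstOrderTy : Ty → Prop
  | base : FirstOrderTy (.base ι)
  | arrow : FirstOrderTy B → FirstOrderTy (.arrow (.base ι) ∅ B)

/-- A global signature: types of constants, the denotation function ζ for constants
(with the assumptions of the paper), and signatures `ty(op) = ∀ᾱ. A ↪ B` of effect
operations. -/
structure Sig where
  tyc : ℕ → Ty
  tyc_fo : ∀ c, FirstOrderTy (tyc c)
  zeta : ℕ → ℕ → Option ℕ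
  zeta_def : ∀ c₁ c₂, (zeta c₁ c₂).isSome ↔
      ∃ ι A, tyc c₁ = .arrow (.base ι) ∅ A ∧ tyc c₂ = .base ι
  zeta_ty : ∀ c₁ c₂ c ι A, zeta c₁ c₂ = some c →
      tyc c₁ = .arrow (.base ι) ∅ A → tyc c = A
  opSig : ℕ → List ℕ × Ty × Ty
  opSig_ftv : ∀ o, (opSig o).2.1.ftv ∪ (opSig o).2.2.ftv ⊆ (opSig o).1.toFinset

/-! ## Typing contexts -/

inductive CtxEntry : Type
  | evar : ℕ → Scheme → CtxEntry
  | tvar : ℕ → CtxEntry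

/-- Typing contexts, with the most recent entry at the head of the list.
`Γ₁, Γ₂` is written `Γ₂ ++ Γ₁`. -/
abbrev Ctx := List CtxEntry

/-- The context `ᾱ` consisting of type-variable declarations. -/
def tvarsCtx (as : List ℕ) : Ctx := as.map .tvar

def CtxEntry.domE : CtxEntry → ℕ ⊕ ℕ
  | .evar x _ => .inl x
  | .tvar a => .inr a

/-- `dom(Γ)`: term variables (inl) and type variables (inr) declared in Γ. -/
def Ctx.dom (Γ : Ctx) : Finset (ℕ ⊕ ℕ) := (Γ.map CtxEntry.domE).toFinset

/-- The type variables declared in Γ. -/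
def Ctx.tvars (Γ : Ctx) : Finset ℕ :=
  Γ.foldr (fun it s => match it with | .tvar a => insert a s | _ => s) ∅

/-- `Γ ⊢ A`. -/
def wfTy (Γ : Ctx) (A : Ty) : Prop := A.ftv ⊆ Ctx.tvars Γ

/-- `Γ ⊢ σ`. -/
def wfScheme (Γ : Ctx) (σ : Scheme) : Prop := σ.ftv ⊆ Ctx.tvars Γ

/-- Well-formedness `⊢ Γ` of typing contexts. -/
inductive CtxWF : Ctx → Prop
  | nil : CtxWF []
  | evar : CtxWF Γ → wfScheme Γ σ → Sum.inl x ∉ Ctx.dom Γ → CtxWF (.evar x σ :: Γ)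
  | tvar : CtxWF Γ → Sum.inr a ∉ Ctx.dom Γ → CtxWF (.tvar a :: Γ)

/-- A context consisting only of type variables (ranged over by Δ in the paper). -/
def TyVarCtx (Γ : Ctx) : Prop := ∀ it ∈ Γ, ∃ a, it = CtxEntry.tvar a

/-- Substitution on context entries / contexts. -/
def CtxEntry.subst (s : TySubst) : CtxEntry → CtxEntry
  | .evar x σ => .evar x (σ.subst s)
  | .tvar a => .tvar a

def Ctx.subst (s : TySubst) (Γ : Ctx) : Ctx := Γ.map (CtxEntry.subst s)

/-! ## Resumption types of λ_eff^Λ -/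

/-- Resumption types `r ::= none | (ᾱ, A, B →ε C)`. -/
abbrev Resum := Option (List ℕ × Ty × Ty × Eff × Ty)

def Resum.tyvars : Resum → Finset ℕ
  | none => ∅
  | some (as, _, _, _, _) => as.toFinset

def Resum.subst (s : TySubst) : Resum → Resum
  | none => none
  | some (as, A, B, ε, C) =>
      some (as, A.subst (mask s as), B.subst (mask s as), ε, C.subst s)

/-- The side condition on resumption types:
`ftv(A) ∪ ftv(B) ⊆ {ᾱ}` and `ftv(C) ∩ {ᾱ} = ∅`. -/
def Resum.WF : Resum → Prop
  | none => True
  | some (as, A, B, _, C) => A.ftv ∪ B.ftv ⊆ as.toFinset ∧ C.ftv ∩ as.toFinset = ∅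
/-! ## Syntax of λ_eff^Λ -/

mutual
/-- Terms of `λ_eff^Λ`.  In `opCont o σs ᾱ w E` (the paper's `#op(σ̄, Λᾱ.w, E^ᾱ)`),
the polymorphic value `Λᾱ.w` is represented by the binder list `ᾱ` and the value `w`. -/
inductive Tm : Type
  | var    : ℕ → List Ty → Tm
  | const  : ℕ → Tm
  | abs    : ℕ → Tm → Tm
  | app    : Tm → Tm → Tm
  | letin  : ℕ → List ℕ → Tm → Tm → Tm
  | op     : ℕ → List Ty → Tm → Tm
  | opCont : ℕ → List Scheme → List ℕ → Tm → ECtx → Tm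
  | handle : Tm → Handler → Tm
  | resume : List ℕ → ℕ → Tm → Tm

/-- Handlers of `λ_eff^Λ`. -/
inductive Handler : Type
  | ret : ℕ → Tm → Handler
  | opH : Handler → List ℕ → ℕ → ℕ → Tm → Handler

/-- Evaluation contexts of `λ_eff^Λ`. -/
inductive ECtx : Type
  | hole : ECtx
  | appL : ECtx → Tm → ECtx
  | appR : Tm → ECtx → ECtx
  | letE : ℕ → List ℕ → ECtx → Tm → ECtx
  | opE  : ℕ → List Ty → ECtx → ECtx
  | handleE : ECtx → Handler → ECtx
end

/-- Values `v ::= c | λx.e`. -/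
inductive IsValue : Tm → Prop
  | const : IsValue (.const c)
  | abs : IsValue (.abs x e)

/-- The type variables `ᾱ` bound above the hole of an evaluation context `E^ᾱ`. -/
def ECtx.binders : ECtx → List ℕ
  | .hole => []
  | .appL E _ => E.binders
  | .appR _ E => E.binders
  | .letE _ as E _ => as ++ E.binders
  | .opE _ _ E => E.binders
  | .handleE E _ => E.binders

/-- Filling the hole of an evaluation context: `E[e]`. -/
def ECtx.fill : ECtx → Tm → Tm
  | .hole, e => e
  | .appL E e₂, e => .app (E.fill e) e₂
  | .appR v E, e => .app v (E.fill e)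
  | .letE x as E e₂, e => .letin x as (E.fill e) e₂
  | .opE o As E, e => .op o As (E.fill e)
  | .handleE E h, e => .handle (E.fill e) h

/-- `ops(h)`: the effect operations handled by `h`. -/
def Handler.ops : Handler → Finset ℕ
  | .ret _ _ => ∅
  | .opH h _ o _ _ => insert o h.ops

/-- `h^return`. -/
def Handler.retClause : Handler → ℕ × Tm
  | .ret x e => (x, e)
  | .opH h _ _ _ _ => h.retClause

/-- `h^op`. -/
def Handler.opClause : Handler → ℕ → Option (List ℕ × ℕ × Tm)
  | .ret _ _, _ => none
  | .opH h as o x e, o' => if o' = o then some (as, x, e) else h.opClause o'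

/-! ### Substitutions and free variables of λ_eff^Λ terms -/

mutual
/-- Type substitution `e[Ā/ᾱ]` on terms. -/
def Tm.tsub (s : TySubst) : Tm → Tm
  | .var x As => .var x (As.map (Ty.subst s))
  | .const c => .const c
  | .abs x e => .abs x (Tm.tsub s e)
  | .app e₁ e₂ => .app (Tm.tsub s e₁) (Tm.tsub s e₂)
  | .letin x as e₁ e₂ => .letin x as (Tm.tsub (mask s as) e₁) (Tm.tsub s e₂)
  | .op o As e => .op o (As.map (Ty.subst s)) (Tm.tsub s e)
  | .opCont o σs as w E =>
      .opCont o (σs.map (Scheme.subst s)) as (Tm.tsub (mask s as) w) (ECtx.tsubE s E)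
  | .handle e h => .handle (Tm.tsub s e) (Handler.tsubH s h)
  | .resume as x e => .resume as x (Tm.tsub (mask s as) e)

def Handler.tsubH (s : TySubst) : Handler → Handler
  | .ret x e => .ret x (Tm.tsub s e)
  | .opH h as o x e => .opH (Handler.tsubH s h) as o x (Tm.tsub (mask s as) e)

def ECtx.tsubE (s : TySubst) : ECtx → ECtx
  | .hole => .hole
  | .appL E e => .appL (ECtx.tsubE s E) (Tm.tsub s e)
  | .appR v E => .appR (Tm.tsub s v) (ECtx.tsubE s E)
  | .letE x as E e => .letE x as (ECtx.tsubE (mask s as) E) (Tm.tsub s e)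
  | .opE o As E => .opE o (As.map (Ty.subst s)) (ECtx.tsubE s E)
  | .handleE E h => .handleE (ECtx.tsubE s E) (Handler.tsubH s h)
end

mutual
/-- Substitution `e[Λᾱ.v/x]` of a polymorphic value for a term variable, with
`(x Ā)[Λᾱ.v/x] = v[Ā/ᾱ]`. -/
def Tm.vsub (x : ℕ) (as : List ℕ) (v : Tm) : Tm → Tm
  | .var y Bs => if y = x then Tm.tsub (subList as Bs) v else .var y Bs
  | .const c => .const c
  | .abs y e => .abs y (if y = x then e else Tm.vsub x as v e)
  | .app e₁ e₂ => .app (Tm.vsub x as v e₁) (Tm.vsub x as v e₂)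
  | .letin y bs e₁ e₂ =>
      .letin y bs (Tm.vsub x as v e₁) (if y = x then e₂ else Tm.vsub x as v e₂)
  | .op o As e => .op o As (Tm.vsub x as v e)
  | .opCont o σs bs w E => .opCont o σs bs (Tm.vsub x as v w) (ECtx.vsubE x as v E)
  | .handle e h => .handle (Tm.vsub x as v e) (Handler.vsubH x as v h)
  | .resume bs y e => .resume bs y (if y = x then e else Tm.vsub x as v e)

def Handler.vsubH (x : ℕ) (as : List ℕ) (v : Tm) : Handler → Handler
  | .ret y e => .ret y (if y = x then e else Tm.vsub x as v e)
  | .opH h bs o y e =>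
      .opH (Handler.vsubH x as v h) bs o y (if y = x then e else Tm.vsub x as v e)

def ECtx.vsubE (x : ℕ) (as : List ℕ) (v : Tm) : ECtx → ECtx
  | .hole => .hole
  | .appL E e => .appL (ECtx.vsubE x as v E) (Tm.vsub x as v e)
  | .appR w E => .appR (Tm.vsub x as v w) (ECtx.vsubE x as v E)
  | .letE y bs E e =>
      .letE y bs (ECtx.vsubE x as v E) (if y = x then e else Tm.vsub x as v e)
  | .opE o As E => .opE o As (ECtx.vsubE x as v E)
  | .handleE E h => .handleE (ECtx.vsubE x as v E) (Handler.vsubH x as v h)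
end

def ftvList (As : List Ty) : Finset ℕ := As.foldr (fun A s => A.ftv ∪ s) ∅

def ftvSchemes (σs : List Scheme) : Finset ℕ := σs.foldr (fun σ s => σ.ftv ∪ s) ∅

mutual
/-- Free type variables of a term. -/
def Tm.ftv : Tm → Finset ℕ
  | .var _ As => ftvList As
  | .const _ => ∅
  | .abs _ e => Tm.ftv e
  | .app e₁ e₂ => Tm.ftv e₁ ∪ Tm.ftv e₂
  | .letin _ as e₁ e₂ => (Tm.ftv e₁ \ as.toFinset) ∪ Tm.ftv e₂
  | .op _ As e => ftvList As ∪ Tm.ftv e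
  | .opCont _ σs as w E => ftvSchemes σs ∪ (Tm.ftv w \ as.toFinset) ∪ ECtx.ftvE E
  | .handle e h => Tm.ftv e ∪ Handler.ftvH h
  | .resume as _ e => Tm.ftv e \ as.toFinset

def Handler.ftvH : Handler → Finset ℕ
  | .ret _ e => Tm.ftv e
  | .opH h as _ _ e => Handler.ftvH h ∪ (Tm.ftv e \ as.toFinset)

def ECtx.ftvE : ECtx → Finset ℕ
  | .hole => ∅
  | .appL E e => ECtx.ftvE E ∪ Tm.ftv e
  | .appR v E => Tm.ftv v ∪ ECtx.ftvE E
  | .letE _ as E e => (ECtx.ftvE E \ as.toFinset) ∪ Tm.ftv e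
  | .opE _ As E => ftvList As ∪ ECtx.ftvE E
  | .handleE E h => ECtx.ftvE E ∪ Handler.ftvH h
end

mutual
/-- Free term variables of a term. -/
def Tm.fv : Tm → Finset ℕ
  | .var x _ => {x}
  | .const _ => ∅
  | .abs x e => (Tm.fv e).erase x
  | .app e₁ e₂ => Tm.fv e₁ ∪ Tm.fv e₂
  | .letin x _ e₁ e₂ => Tm.fv e₁ ∪ (Tm.fv e₂).erase x
  | .op _ _ e => Tm.fv e
  | .opCont _ _ _ w E => Tm.fv w ∪ ECtx.fvE E
  | .handle e h => Tm.fv e ∪ Handler.fvH h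
  | .resume _ x e => (Tm.fv e).erase x

def Handler.fvH : Handler → Finset ℕ
  | .ret x e => (Tm.fv e).erase x
  | .opH h _ _ x e => Handler.fvH h ∪ (Tm.fv e).erase x

def ECtx.fvE : ECtx → Finset ℕ
  | .hole => ∅
  | .appL E e => ECtx.fvE E ∪ Tm.fv e
  | .appR v E => Tm.fv v ∪ ECtx.fvE E
  | .letE x _ E e => ECtx.fvE E ∪ (Tm.fv e).erase x
  | .opE _ _ E => ECtx.fvE E
  | .handleE E h => ECtx.fvE E ∪ Handler.fvH h
end
/-! ### Continuation substitution -/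

mutual
/-- Continuation substitution `e[Ec/resume]^{∀β̄.C̄}_{Λβ̄.v}` of the paper, as a relation:
`CSub Ec bs Cs v e e'` means that `e'` is the result of substituting the continuation
`Ec` (with binders `bs = β̄`) for resumptions in `e`, with invocation type arguments
`Cs = C̄` and invocation argument `v`. -/
inductive CSub (Ec : ECtx) (bs : List ℕ) (Cs : List Ty) (v : Tm) : Tm → Tm → Prop
  | var : CSub Ec bs Cs v (.var x As) (.var x As)
  | const : CSub Ec bs Cs v (.const c) (.const c)
  | abs : CSub Ec bs Cs v e e' → CSub Ec bs Cs v (.abs x e) (.abs x e')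
  | app : CSub Ec bs Cs v e₁ e₁' → CSub Ec bs Cs v e₂ e₂' →
      CSub Ec bs Cs v (.app e₁ e₂) (.app e₁' e₂')
  | letin : CSub Ec bs Cs v e₁ e₁' → CSub Ec bs Cs v e₂ e₂' →
      CSub Ec bs Cs v (.letin x as e₁ e₂) (.letin x as e₁' e₂')
  | op : CSub Ec bs Cs v e e' → CSub Ec bs Cs v (.op o As e) (.op o As e')
  | opCont : CSub Ec bs Cs v w w' →
      CSub Ec bs Cs v (.opCont o σs as w E) (.opCont o σs as w' E)
  | handle : CSub Ec bs Cs v e e' → CSubH Ec bs Cs v h h' →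
      CSub Ec bs Cs v (.handle e h) (.handle e' h')
  | resume : CSub Ec bs Cs v e e' →
      (Tm.ftv e ∪ ECtx.ftvE Ec) ∩ bs.toFinset = ∅ →
      y ∉ Tm.fv e ∪ Tm.fv e' ∪ ECtx.fvE Ec ∪ Tm.fv v →
      CSub Ec bs Cs v (.resume gs z e)
        (.letin y bs (Tm.vsub z [] v (Tm.tsub (subList gs Cs) e'))
           (ECtx.fill Ec (.var y (bs.map Ty.tvar))))

/-- Continuation substitution on handlers: it applies only to the return clause. -/
inductive CSubH (Ec : ECtx) (bs : List ℕ) (Cs : List Ty) (v : Tm) : Handler → Handler → Prop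
  | ret : CSub Ec bs Cs v e e' → CSubH Ec bs Cs v (.ret x e) (.ret x e')
  | opH : CSubH Ec bs Cs v h h' → CSubH Ec bs Cs v (.opH h as o x e) (.opH h' as o x e)
end

/-! ### Operational semantics of λ_eff^Λ -/

/-- The reduction relation `e₁ ⇝ e₂` of Figure 4. -/
inductive Red (S : Sig) : Tm → Tm → Prop
  | const : S.zeta c₁ c₂ = some c →
      Red S (.app (.const c₁) (.const c₂)) (.const c)
  | beta : IsValue v →
      Red S (.app (.abs x e) v) (Tm.vsub x [] v e)
  | letv : IsValue v →
      Red S (.letin x as v e) (Tm.vsub x as v e)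
  | ret : IsValue v → Handler.retClause h = (x, e) →
      Red S (.handle v h) (Tm.vsub x [] v e)
  | opv : IsValue v →
      Red S (.op o As v) (.opCont o (As.map .ty) [] v .hole)
  | opApp1 :
      Red S (.app (.opCont o σs bs w E) e₂) (.opCont o σs bs w (.appL E e₂))
  | opApp2 : IsValue v₁ →
      Red S (.app v₁ (.opCont o σs bs w E)) (.opCont o σs bs w (.appR v₁ E))
  | opOp :
      Red S (.op o' As (.opCont o σs bs w E)) (.opCont o σs bs w (.opE o' As E))
  | opHandle : o ∉ Handler.ops h →
      Red S (.handle (.opCont o σs bs w E) h) (.opCont o σs bs w (.handleE E h))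
  | opLet :
      Red S (.letin x as (.opCont o σs bs w E) e₂)
        (.opCont o (σs.map (Scheme.allEach as)) (as ++ bs) w (.letE x as E e₂))
  | handle :
      Handler.opClause h o = some (αs, x, e) →
      IsValue v →
      ECtx.binders E = bs →
      CSub (.handleE E h) bs As v e e' →
      Red S (.handle (.opCont o (As.map (Scheme.close bs)) bs v E) h)
        (Tm.vsub x [] (Tm.tsub (botSub bs) v)
          (Tm.tsub (subList αs (As.map (Ty.subst (botSub bs)))) e'))

/-- The evaluation relation `e₁ ⟶ e₂` (rule E-Eval). -/
inductive Eval (S : Sig) : Tm → Tm → Prop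
  | eval : Red S e₁ e₂ → Eval S (ECtx.fill E e₁) (ECtx.fill E e₂)

/-! ### Typing of λ_eff^Λ (Figures 5 and 6) -/

mutual
/-- Term typing `Γ; r ⊢ e : A | ε` of λ_eff^Λ. -/
inductive TmTy (S : Sig) : Ctx → Resum → Tm → Ty → Eff → Prop
  | var : CtxWF Γ → CtxEntry.evar x (Scheme.close as A) ∈ Γ →
      (∀ B ∈ Bs, wfTy Γ B) → Bs.length = as.length →
      TmTy S Γ r (.var x Bs) (A.subst (subList as Bs)) ε
  | const : CtxWF Γ → TmTy S Γ r (.const c) (S.tyc c) ε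
  | abs : TmTy S (.evar x (.ty A) :: Γ) r e B ε' →
      TmTy S Γ r (.abs x e) (.arrow A ε' B) ε
  | app : TmTy S Γ r e₁ (.arrow A ε' B) ε → TmTy S Γ r e₂ A ε → ε' ⊆ ε →
      TmTy S Γ r (.app e₁ e₂) B ε
  | opI : S.opSig o = (as, A, B) → o ∈ ε →
      (∀ C ∈ Cs, wfTy Γ C) → Cs.length = as.length →
      TmTy S Γ r e (A.subst (subList as Cs)) ε →
      TmTy S Γ r (.op o Cs e) (B.subst (subList as Cs)) ε
  | opCont : S.opSig o = (as, A, B) → o ∈ ε →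
      (∀ C ∈ Cs, wfScheme Γ (Scheme.close bs C)) → Cs.length = as.length →
      ECtx.binders E = bs →
      IsValue v →
      TmTy S (tvarsCtx bs ++ Γ) r v (A.subst (subList as Cs)) ε →
      ETy S Γ E (Scheme.close bs (B.subst (subList as Cs))) D ε →
      TmTy S Γ r (.opCont o (Cs.map (Scheme.close bs)) bs v E) D ε
  | weak : TmTy S Γ r e A ε → ε ⊆ ε' → TmTy S Γ r e A ε'
  | handle : TmTy S Γ r e B ε' → HTy S Γ r h B ε' A ε →
      TmTy S Γ r (.handle e h) A ε
  | letin : TmTy S (tvarsCtx as ++ Γ) r e₁ B ε →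
      TmTy S (.evar x (Scheme.close as B) :: Γ) r e₂ A ε →
      TmTy S Γ r (.letin x as e₁ e₂) A ε
  | resume : gs.length = as.length →
      (∀ a ∈ as, CtxEntry.tvar a ∈ Γ) →
      TmTy S (.evar x (.ty (A.subst (subList as (gs.map .tvar)))) :: (tvarsCtx gs ++ Γ))
        (some (as, A, B, ε, D)) e (B.subst (subList as (gs.map .tvar))) ε' →
      ε ⊆ ε' →
      TmTy S Γ (some (as, A, B, ε, D)) (.resume gs x e) D ε'

/-- Handler typing `Γ; r ⊢ h : A | ε ⇒ B | ε'` of λ_eff^Λ. -/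
inductive HTy (S : Sig) : Ctx → Resum → Handler → Ty → Eff → Ty → Eff → Prop
  | ret : TmTy S (.evar x (.ty A) :: Γ) r e B ε' → ε ⊆ ε' →
      HTy S Γ r (.ret x e) A ε B ε'
  | opH : HTy S Γ r h A ε B ε' →
      S.opSig o = (as₀, C₀, D₀) → as.length = as₀.length → o ∉ ε →
      TmTy S (.evar x (.ty (C₀.subst (subList as₀ (as.map .tvar)))) :: (tvarsCtx as ++ Γ))
        (some (as, C₀.subst (subList as₀ (as.map .tvar)),
               D₀.subst (subList as₀ (as.map .tvar)), ε', B)) e B ε' →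
      HTy S Γ r (.opH h as o x e) A (insert o ε) B ε'

/-- Continuation typing `Γ ⊢ E : σ ⊸ A | ε` of λ_eff^Λ. -/
inductive ETy (S : Sig) : Ctx → ECtx → Scheme → Ty → Eff → Prop
  | hole : CtxWF Γ → ETy S Γ .hole (.ty A) A ε
  | appL : ETy S Γ E σ (.arrow A ε' B) ε → TmTy S Γ none e₂ A ε → ε' ⊆ ε →
      ETy S Γ (.appL E e₂) σ B ε
  | appR : IsValue v → TmTy S Γ none v (.arrow A ε' B) ε → ETy S Γ E σ A ε → ε' ⊆ ε →
      ETy S Γ (.appR v E) σ B ε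
  | opE : S.opSig o = (as, A, B) → o ∈ ε →
      (∀ C ∈ Cs, wfTy Γ C) → Cs.length = as.length →
      ETy S Γ E σ (A.subst (subList as Cs)) ε →
      ETy S Γ (.opE o Cs E) σ (B.subst (subList as Cs)) ε
  | handleE : ETy S Γ E σ B ε' → HTy S Γ none h B ε' A ε →
      ETy S Γ (.handleE E h) σ A ε
  | weak : ETy S Γ E σ A ε → ε ⊆ ε' → ETy S Γ E σ A ε'
  | letE : ETy S (tvarsCtx as ++ Γ) E σ B ε →
      TmTy S (.evar x (Scheme.close as B) :: Γ) none e A ε →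
      ETy S Γ (.letE x as E e) (Scheme.allEach as σ) A ε
end
/-! ## The surface language λ_eff^let -/

mutual
/-- Terms of `λ_eff^let`. -/
inductive STm : Type
  | var    : ℕ → STm
  | const  : ℕ → STm
  | abs    : ℕ → STm → STm
  | app    : STm → STm → STm
  | letin  : ℕ → STm → STm → STm
  | op     : ℕ → STm → STm
  | handle : STm → SHandler → STm
  | resume : STm → STm

/-- Handlers of `λ_eff^let`. -/
inductive SHandler : Type
  | ret : ℕ → STm → SHandler
  | opH : SHandler → ℕ → ℕ → STm → SHandler
end

/-- Surface resumption types `R ::= none | (ᾱ, x : A, B →ε C)`. -/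
abbrev SResum := Option (List ℕ × ℕ × Ty × Ty × Eff × Ty)

/-- Elaboration `R ⤳ r` of resumption types (dropping the bound variable). -/
def elabR : SResum → Resum
  | none => none
  | some (as, _, A, B, ε, C) => some (as, A, B, ε, C)

mutual
/-- Term typing `Γ; R ⊢ M : A | ε` of λ_eff^let (Figure 2). -/
inductive STmTy (S : Sig) : Ctx → SResum → STm → Ty → Eff → Prop
  | var : CtxWF Γ → CtxEntry.evar x (Scheme.close as A) ∈ Γ →
      (∀ B ∈ Bs, wfTy Γ B) → Bs.length = as.length →
      STmTy S Γ R (.var x) (A.subst (subList as Bs)) ε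
  | const : CtxWF Γ → STmTy S Γ R (.const c) (S.tyc c) ε
  | abs : STmTy S (.evar x (.ty A) :: Γ) R M B ε' →
      STmTy S Γ R (.abs x M) (.arrow A ε' B) ε
  | app : STmTy S Γ R M₁ (.arrow A ε' B) ε → STmTy S Γ R M₂ A ε → ε' ⊆ ε →
      STmTy S Γ R (.app M₁ M₂) B ε
  | letin : STmTy S (tvarsCtx as ++ Γ) R M₁ B ε →
      STmTy S (.evar x (Scheme.close as B) :: Γ) R M₂ A ε →
      STmTy S Γ R (.letin x M₁ M₂) A ε
  | weak : STmTy S Γ R M A ε → ε ⊆ ε' → STmTy S Γ R M A ε'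
  | op : S.opSig o = (as, A, B) → o ∈ ε →
      (∀ C ∈ Cs, wfTy Γ C) → Cs.length = as.length →
      STmTy S Γ R M (A.subst (subList as Cs)) ε →
      STmTy S Γ R (.op o M) (B.subst (subList as Cs)) ε
  | handle : STmTy S Γ R M B ε' → SHTy S Γ R H B ε' A ε →
      STmTy S Γ R (.handle M H) A ε
  | resume :
      CtxWF (Γ₂ ++ .evar x (.ty D) :: Γ₁) →
      (∀ a ∈ as, CtxEntry.tvar a ∈ Γ₁) →
      bs.length = as.length →
      STmTy S (.evar x (.ty (A.subst (subList as (bs.map .tvar)))) ::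
                 (tvarsCtx bs ++ (Γ₂ ++ Γ₁)))
        (some (as, x, A, B, ε₀, C)) M (B.subst (subList as (bs.map .tvar))) ε →
      ε₀ ⊆ ε →
      STmTy S (Γ₂ ++ .evar x (.ty D) :: Γ₁) (some (as, x, A, B, ε₀, C)) (.resume M) C ε

/-- Handler typing `Γ; R ⊢ H : A | ε ⇒ B | ε'` of λ_eff^let (Figure 2). -/
inductive SHTy (S : Sig) : Ctx → SResum → SHandler → Ty → Eff → Ty → Eff → Prop
  | ret : STmTy S (.evar x (.ty A) :: Γ) R M B ε' → ε ⊆ ε' →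
      SHTy S Γ R (.ret x M) A ε B ε'
  | opH : SHTy S Γ R H A ε B ε' → S.opSig o = (as, C, D) → o ∉ ε →
      STmTy S (.evar x (.ty C) :: (tvarsCtx as ++ Γ)) (some (as, x, C, D, ε', B)) M B ε' →
      SHTy S Γ R (.opH H o x M) A (insert o ε) B ε'
end

/-! ## Elaboration from λ_eff^let to λ_eff^Λ (Figure 7) -/

mutual
/-- Elaboration `Γ; R ⊢ M : A | ε ⤳_m e` of λ_eff^let typing derivations to λ_eff^Λ
terms, where `m` maps surface variables to intermediate variables. -/
inductive Elab (S : Sig) : Ctx → SResum → STm → Ty → Eff → (ℕ → ℕ) → Tm → Prop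
  | var : CtxWF Γ → CtxEntry.evar x (Scheme.close as A) ∈ Γ →
      (∀ B ∈ Bs, wfTy Γ B) → Bs.length = as.length →
      Elab S Γ R (.var x) (A.subst (subList as Bs)) ε m (.var (m x) Bs)
  | const : CtxWF Γ → Elab S Γ R (.const c) (S.tyc c) ε m (.const c)
  | abs : Elab S (.evar x (.ty A) :: Γ) R M B ε' (Function.update m x y) e →
      Elab S Γ R (.abs x M) (.arrow A ε' B) ε m (.abs y e)
  | app : Elab S Γ R M₁ (.arrow A ε' B) ε m e₁ → Elab S Γ R M₂ A ε m e₂ → ε' ⊆ ε →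
      Elab S Γ R (.app M₁ M₂) B ε m (.app e₁ e₂)
  | letin : Elab S (tvarsCtx as ++ Γ) R M₁ B ε m e₁ →
      Elab S (.evar x (Scheme.close as B) :: Γ) R M₂ A ε (Function.update m x y) e₂ →
      Elab S Γ R (.letin x M₁ M₂) A ε m (.letin y as e₁ e₂)
  | weak : Elab S Γ R M A ε m e → ε ⊆ ε' → Elab S Γ R M A ε' m e
  | op : S.opSig o = (as, A, B) → o ∈ ε →
      (∀ C ∈ Cs, wfTy Γ C) → Cs.length = as.length →
      Elab S Γ R M (A.subst (subList as Cs)) ε m e →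
      Elab S Γ R (.op o M) (B.subst (subList as Cs)) ε m (.op o Cs e)
  | handle : Elab S Γ R M B ε' m e → ElabH S Γ R H B ε' A ε m h →
      Elab S Γ R (.handle M H) A ε m (.handle e h)
  | resume :
      CtxWF (Γ₂ ++ .evar x (.ty D) :: Γ₁) →
      (∀ a ∈ as, CtxEntry.tvar a ∈ Γ₁) →
      bs.length = as.length →
      Elab S (.evar x (.ty (A.subst (subList as (bs.map .tvar)))) ::
                (tvarsCtx bs ++ (Γ₂ ++ Γ₁)))
        (some (as, x, A, B, ε₀, C)) M (B.subst (subList as (bs.map .tvar))) ε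
        (Function.update m x y) e →
      ε₀ ⊆ ε →
      Elab S (Γ₂ ++ .evar x (.ty D) :: Γ₁) (some (as, x, A, B, ε₀, C)) (.resume M) C ε m
        (.resume bs y e)

/-- Elaboration `Γ; R ⊢ H : A | ε ⇒ B | ε' ⤳_m h` of handler typing derivations. -/
inductive ElabH (S : Sig) :
    Ctx → SResum → SHandler → Ty → Eff → Ty → Eff → (ℕ → ℕ) → Handler → Prop
  | ret : Elab S (.evar x (.ty A) :: Γ) R M B ε' (Function.update m x y) e → ε ⊆ ε' →
      ElabH S Γ R (.ret x M) A ε B ε' m (.ret y e)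
  | opH : ElabH S Γ R H A ε B ε' m h → S.opSig o = (as, C, D) → o ∉ ε →
      Elab S (.evar x (.ty C) :: (tvarsCtx as ++ Γ)) (some (as, x, C, D, ε', B)) M B ε'
        (Function.update m x y) e →
      ElabH S Γ R (.opH H o x M) A (insert o ε) B ε' m (.opH h as o y e)
end

/-- Elaboration `Γ ⤳_m Γ'` of typing contexts. -/
inductive ElabCtx : Ctx → (ℕ → ℕ) → Ctx → Prop
  | nil : ElabCtx [] id []
  | evar : ElabCtx Γ m Γ' →
      ElabCtx (.evar x σ :: Γ) (Function.update m x y) (.evar y σ :: Γ')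
  | tvar : ElabCtx Γ m Γ' → ElabCtx (.tvar a :: Γ) m (.tvar a :: Γ')

/-!
Induction on the surface typing derivation, generalised to arbitrary contexts: every surface
rule is matched by the λ_eff^Λ rule of the same name, binders being renamed to variables fresh
for the target context. The invariant relating the surface context `Γ` to the target context
`Γ'` cannot be the context elaboration `Γ ⤳_m Γ'` itself: the surface rule for `resume M`
removes the bound variable `x` of the enclosing operation clause from `Γ`, whereas the target
term `resume ᾱ y.e` keeps it in `Γ'`. It suffices that `Γ'` declares the same type variables
as `Γ` and binds `m x : σ` whenever `Γ` binds `x : σ`.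
-/

lemma exists_inl_notMem (s : Finset (ℕ ⊕ ℕ)) : ∃ y, Sum.inl y ∉ s := by
  obtain ⟨y, hy⟩ := Infinite.exists_notMem_finset s.toLeft
  exact ⟨y, by simpa using hy⟩

namespace Ctx

lemma mem_tvars {Γ : Ctx} {a : ℕ} : a ∈ Γ.tvars ↔ CtxEntry.tvar a ∈ Γ := by
  induction Γ with
  | nil => simp [Ctx.tvars]
  | cons e Γ ih => cases e <;> simp_all [Ctx.tvars, eq_comm]

lemma mem_dom {Γ : Ctx} {c : ℕ ⊕ ℕ} : c ∈ Γ.dom ↔ ∃ e ∈ Γ, e.domE = c := by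
  simp [Ctx.dom]

lemma inl_mem_dom_of_evar_mem {Γ : Ctx} {x : ℕ} {σ : Scheme} (h : CtxEntry.evar x σ ∈ Γ) :
    Sum.inl x ∈ Γ.dom :=
  mem_dom.2 ⟨_, h, rfl⟩

lemma inr_mem_dom {Γ : Ctx} {a : ℕ} : Sum.inr a ∈ Γ.dom ↔ CtxEntry.tvar a ∈ Γ := by
  rw [mem_dom]
  constructor
  · rintro ⟨(⟨x, σ⟩ | b), he, hc⟩ <;> simp_all [CtxEntry.domE]
  · exact fun h => ⟨_, h, rfl⟩

end Ctx

lemma subList_self_getD (as : List ℕ) (b : ℕ) :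
    (subList as (as.map Ty.tvar) b).getD (Ty.tvar b) = Ty.tvar b := by
  induction as with
  | nil => rfl
  | cons a as ih =>
    by_cases hb : b = a
    · simp [subList, hb]
    · have hba : (b == a) = false := beq_false_of_ne hb
      simpa [subList, List.lookup, hba] using ih

@[simp]
lemma Ty.subst_subList_self (as : List ℕ) (C : Ty) :
    C.subst (subList as (as.map Ty.tvar)) = C := by
  induction C with
  | tvar b => exact subList_self_getD as b
  | base i => rfl
  | arrow A ε B ihA ihB => simp [Ty.subst, ihA, ihB]

/-- `evar_mem` assumes `⊢ Γ` because a shadowed binding of `Γ` need not survive in `Γ'`. -/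
structure CtxEmbedding (Γ : Ctx) (m : ℕ → ℕ) (Γ' : Ctx) : Prop where
  tvar_mem_iff : ∀ a, CtxEntry.tvar a ∈ Γ' ↔ CtxEntry.tvar a ∈ Γ
  evar_mem : CtxWF Γ → ∀ {x σ}, CtxEntry.evar x σ ∈ Γ → CtxEntry.evar (m x) σ ∈ Γ'
  ctxWF : CtxWF Γ → CtxWF Γ'

namespace CtxEmbedding

variable {Γ Γ' : Ctx} {m : ℕ → ℕ}

lemma nil : CtxEmbedding [] id [] :=
  ⟨fun _ => Iff.rfl, fun _ {_ _} h => h, id⟩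

lemma tvars_eq (h : CtxEmbedding Γ m Γ') : Γ'.tvars = Γ.tvars := by
  ext a
  simp only [Ctx.mem_tvars, h.tvar_mem_iff]

lemma wfTy (h : CtxEmbedding Γ m Γ') {A : Ty} (hA : EffLam.wfTy Γ A) : EffLam.wfTy Γ' A := by
  rwa [EffLam.wfTy, h.tvars_eq]

lemma wfScheme (h : CtxEmbedding Γ m Γ') {σ : Scheme} (hσ : EffLam.wfScheme Γ σ) :
    EffLam.wfScheme Γ' σ := by
  rwa [EffLam.wfScheme, h.tvars_eq]

lemma cons_tvar (h : CtxEmbedding Γ m Γ') (a : ℕ) :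
    CtxEmbedding (.tvar a :: Γ) m (.tvar a :: Γ') where
  tvar_mem_iff b := by simp [h.tvar_mem_iff]
  evar_mem hw x σ hx := by
    cases hw with
    | tvar hw _ => simpa using h.evar_mem hw (by simpa using hx)
  ctxWF hw := by
    cases hw with
    | tvar hw ha =>
      exact .tvar (h.ctxWF hw) (by rwa [Ctx.inr_mem_dom, h.tvar_mem_iff, ← Ctx.inr_mem_dom])

lemma tvarsCtx_append (h : CtxEmbedding Γ m Γ') (as : List ℕ) :
    CtxEmbedding (tvarsCtx as ++ Γ) m (tvarsCtx as ++ Γ') := by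
  induction as with
  | nil => exact h
  | cons a as ih => exact ih.cons_tvar a

lemma cons_evar (h : CtxEmbedding Γ m Γ') {y : ℕ} (hy : Sum.inl y ∉ Γ'.dom) (x : ℕ)
    (σ : Scheme) :
    CtxEmbedding (.evar x σ :: Γ) (Function.update m x y) (.evar y σ :: Γ') where
  tvar_mem_iff a := by simp [h.tvar_mem_iff]
  evar_mem hw z τ hz := by
    cases hw with
    | evar hw _ hx =>
      rcases List.mem_cons.1 hz with hzx | hzΓ
      · cases hzx
        simp
      · have hzx : z ≠ x := by
          rintro rfl
          exact hx (Ctx.inl_mem_dom_of_evar_mem hzΓ)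
        rw [Function.update_of_ne hzx]
        exact List.mem_cons_of_mem _ (h.evar_mem hw hzΓ)
  ctxWF hw := by
    cases hw with
    | evar hw hσ _ => exact .evar (h.ctxWF hw) (h.wfScheme hσ) hy

lemma exists_cons_evar (h : CtxEmbedding Γ m Γ') (x : ℕ) (σ : Scheme) :
    ∃ y, CtxEmbedding (.evar x σ :: Γ) (Function.update m x y) (.evar y σ :: Γ') := by
  obtain ⟨y, hy⟩ := exists_inl_notMem Γ'.dom
  exact ⟨y, h.cons_evar hy x σ⟩

lemma erase_evar {Γ₁ Γ₂ : Ctx} {x : ℕ} {σ : Scheme}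
    (h : CtxEmbedding (Γ₂ ++ .evar x σ :: Γ₁) m Γ')
    (hw : CtxWF (Γ₂ ++ .evar x σ :: Γ₁)) :
    CtxEmbedding (Γ₂ ++ Γ₁) m Γ' where
  tvar_mem_iff a := by simp [h.tvar_mem_iff]
  evar_mem _ z τ hz := h.evar_mem hw (by simp at hz ⊢; tauto)
  ctxWF _ := h.ctxWF hw

end CtxEmbedding

variable {S : Sig}

mutual

theorem STmTy.exists_elaboration {Γ : Ctx} {R : SResum} {M : STm} {A : Ty} {ε : Eff}
    (hM : STmTy S Γ R M A ε) {m : ℕ → ℕ} {Γ' : Ctx} (hΓ : CtxEmbedding Γ m Γ') :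
    ∃ e, Elab S Γ R M A ε m e ∧ TmTy S Γ' (elabR R) e A ε :=
  match hM with
  | .var hw hx hBs hlen =>
    ⟨_, .var hw hx hBs hlen,
      .var (hΓ.ctxWF hw) (hΓ.evar_mem hw hx) (fun B hB => hΓ.wfTy (hBs B hB)) hlen⟩
  | .const hw => ⟨_, .const hw, .const (hΓ.ctxWF hw)⟩
  | STmTy.abs (x := x) (A := A) hM => by
    obtain ⟨y, hΓy⟩ := hΓ.exists_cons_evar x (.ty A)
    obtain ⟨e, he, ht⟩ := STmTy.exists_elaboration hM hΓy
    exact ⟨_, .abs he, .abs ht⟩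
  | .app hM₁ hM₂ hε => by
    obtain ⟨e₁, he₁, ht₁⟩ := STmTy.exists_elaboration hM₁ hΓ
    obtain ⟨e₂, he₂, ht₂⟩ := STmTy.exists_elaboration hM₂ hΓ
    exact ⟨_, .app he₁ he₂ hε, .app ht₁ ht₂ hε⟩
  | STmTy.letin (as := as) (B := B) (x := x) hM₁ hM₂ => by
    obtain ⟨e₁, he₁, ht₁⟩ := STmTy.exists_elaboration hM₁ (hΓ.tvarsCtx_append as)
    obtain ⟨y, hΓy⟩ := hΓ.exists_cons_evar x (Scheme.close as B)
    obtain ⟨e₂, he₂, ht₂⟩ := STmTy.exists_elaboration hM₂ hΓy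
    exact ⟨_, .letin he₁ he₂, .letin ht₁ ht₂⟩
  | .weak hM hε => by
    obtain ⟨e, he, ht⟩ := STmTy.exists_elaboration hM hΓ
    exact ⟨e, .weak he hε, .weak ht hε⟩
  | .op hsig ho hCs hlen hM => by
    obtain ⟨e, he, ht⟩ := STmTy.exists_elaboration hM hΓ
    exact ⟨_, .op hsig ho hCs hlen he, .opI hsig ho (fun C hC => hΓ.wfTy (hCs C hC)) hlen ht⟩
  | .handle hM hH => by
    obtain ⟨e, he, ht⟩ := STmTy.exists_elaboration hM hΓ
    obtain ⟨h, heh, hth⟩ := SHTy.exists_elaboration hH hΓ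
    exact ⟨_, .handle he heh, .handle ht hth⟩
  | STmTy.resume (as := as) (x := x) (bs := bs) (A := A) hw has hlen hM hε => by
    obtain ⟨y, hΓy⟩ := ((hΓ.erase_evar hw).tvarsCtx_append bs).exists_cons_evar x
      (.ty (A.subst (subList as (bs.map .tvar))))
    obtain ⟨e, he, ht⟩ := STmTy.exists_elaboration hM hΓy
    have has_Γ' : ∀ a ∈ as, CtxEntry.tvar a ∈ Γ' := fun a ha =>
      (hΓ.tvar_mem_iff a).2 (by simp [has a ha])
    exact ⟨_, .resume hw has hlen he hε, .resume hlen has_Γ' ht hε⟩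

theorem SHTy.exists_elaboration {Γ : Ctx} {R : SResum} {H : SHandler} {A : Ty} {ε : Eff}
    {B : Ty} {ε' : Eff} (hH : SHTy S Γ R H A ε B ε') {m : ℕ → ℕ} {Γ' : Ctx}
    (hΓ : CtxEmbedding Γ m Γ') :
    ∃ h, ElabH S Γ R H A ε B ε' m h ∧ HTy S Γ' (elabR R) h A ε B ε' :=
  match hH with
  | SHTy.ret (x := x) (A := A) hM hε => by
    obtain ⟨y, hΓy⟩ := hΓ.exists_cons_evar x (.ty A)
    obtain ⟨e, he, ht⟩ := STmTy.exists_elaboration hM hΓy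
    exact ⟨_, .ret he hε, .ret ht hε⟩
  | SHTy.opH (as := as) (C := C) (x := x) hH hsig ho hM => by
    obtain ⟨h, heh, hth⟩ := SHTy.exists_elaboration hH hΓ
    obtain ⟨y, hΓy⟩ := (hΓ.tvarsCtx_append as).exists_cons_evar x (.ty C)
    obtain ⟨e, he, ht⟩ := STmTy.exists_elaboration hM hΓy
    -- λ_eff^Λ instantiates the signature of `o` with the clause's own variables: `C[ᾱ/ᾱ] = C`
    exact ⟨_, .opH heh hsig ho he, .opH hth hsig rfl ho (by simpa [elabR] using ht)⟩

end

/-- **Theorem 1 (Elaboration is type-preserving, for programs).**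
If `M` is a well-typed program of `A` (i.e., `∅; none ⊢ M : A | ⟨⟩`), then
`∅; none ⊢ M : A | ⟨⟩ ⤳_∅ e` (elaboration under the identity variable mapping) and
`∅; none ⊢ e : A | ⟨⟩` for some `e`. -/
theorem elaboration_type_preserving_program (S : Sig) (M : STm) (A : Ty)
    (h : STmTy S [] none M A ∅) :
    ∃ e : Tm, Elab S [] none M A ∅ id e ∧ TmTy S [] none e A ∅ :=
  h.exists_elaboration .nil

end EffLam
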